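/- Let Λ : M_{d_A}(ℂ) → M_{d_B}(ℂ) be a channel, and let Υ be a linear map from the vector space of linear maps M_{d_A}(ℂ) → M_{d_B}(ℂ) to the vector space of linear maps M_{d_{A'}}(ℂ) → M_{d_{B'}}(ℂ) such that Υ maps channels to channels and PPT-binding channels to PPT-binding channels. Then R_KE(Υ(Λ)) ≤ R_KE(Λ). -/

import Mathlib

open Matrix
open scoped ComplexOrder

section Defs

variable {ιA ιB : Type*}

/-- Partial transpose on the second tensor factor. -/
def ptranspose (M : Matrix (ιA × ιB) (ιA × ιB) ℂ) : Matrix (ιA × ιB) (ιA × ιB) ℂ :=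
  Matrix.of fun p q => M (p.1, q.2) (q.1, p.2)

/-- PPT matrix: both it and its partial transpose are positive semidefinite. -/
def IsPPT [Fintype ιA] [Fintype ιB] (M : Matrix (ιA × ιB) (ιA × ιB) ℂ) : Prop :=
  M.PosSemidef ∧ (ptranspose M).PosSemidef

/-- A quantum state: positive semidefinite with trace one. -/
def IsState {ι : Type*} [Fintype ι] (ρ : Matrix ι ι ℂ) : Prop :=
  ρ.PosSemidef ∧ ρ.trace = 1

/-- The map `id_R ⊗ Φ` acting on matrices over a product index. -/
def idTensor (ιR : Type*) (Φ : Matrix ιA ιA ℂ →ₗ[ℂ] Matrix ιB ιB ℂ) :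
    Matrix (ιR × ιA) (ιR × ιA) ℂ →ₗ[ℂ] Matrix (ιR × ιB) (ιR × ιB) ℂ where
  toFun M := Matrix.of fun p q => Φ (Matrix.of fun a b => M (p.1, a) (q.1, b)) p.2 q.2
  map_add' M N := by
    funext p q
    show Φ ((Matrix.of fun a b => M (p.1, a) (q.1, b)) + (Matrix.of fun a b => N (p.1, a) (q.1, b))) p.2 q.2 = _
    rw [map_add]
    rfl
  map_smul' c M := by
    funext p q
    show Φ (c • (Matrix.of fun a b => M (p.1, a) (q.1, b))) p.2 q.2 = _
    rw [_root_.map_smul]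
    rfl

/-- Complete positivity. -/
def IsCP [Fintype ιA] [Fintype ιB] (Φ : Matrix ιA ιA ℂ →ₗ[ℂ] Matrix ιB ιB ℂ) : Prop :=
  ∀ (k : ℕ) (X : Matrix (Fin k × ιA) (Fin k × ιA) ℂ), X.PosSemidef →
    ((idTensor (Fin k) Φ) X).PosSemidef

/-- Trace preservation. -/
def IsTP [Fintype ιA] [Fintype ιB] (Φ : Matrix ιA ιA ℂ →ₗ[ℂ] Matrix ιB ιB ℂ) : Prop :=
  ∀ X : Matrix ιA ιA ℂ, (Φ X).trace = X.trace

/-- A quantum channel: completely positive and trace preserving. -/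
def IsChannel [Fintype ιA] [Fintype ιB] (Φ : Matrix ιA ιA ℂ →ₗ[ℂ] Matrix ιB ιB ℂ) : Prop :=
  IsCP Φ ∧ IsTP Φ

/-- A map is PPT-binding if `id_k ⊗ Φ` sends positive semidefinite matrices to PPT matrices. -/
def PPTBinding [Fintype ιA] [Fintype ιB] (Φ : Matrix ιA ιA ℂ →ₗ[ℂ] Matrix ιB ιB ℂ) : Prop :=
  ∀ (k : ℕ) (X : Matrix (Fin k × ιA) (Fin k × ιA) ℂ), X.PosSemidef →
    IsPPT ((idTensor (Fin k) Φ) X)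

/-- A PPT-binding channel. -/
def PPTBindingChannel [Fintype ιA] [Fintype ιB] (Φ : Matrix ιA ιA ℂ →ₗ[ℂ] Matrix ιB ιB ℂ) : Prop :=
  IsChannel Φ ∧ PPTBinding Φ

/-- The channel robustness with respect to PPT-binding channels. -/
noncomputable def RKE [Fintype ιA] [Fintype ιB] (Λ : Matrix ιA ιA ℂ →ₗ[ℂ] Matrix ιB ιB ℂ) : ℝ :=
  sInf {l : ℝ | 0 ≤ l ∧ ∃ Γ Θ : Matrix ιA ιA ℂ →ₗ[ℂ] Matrix ιB ιB ℂ,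
    PPTBindingChannel Γ ∧ PPTBindingChannel Θ ∧ Λ + (l : ℂ) • Γ = ((1 + l : ℝ) : ℂ) • Θ}

/-- The PPT robustness of a state. -/
noncomputable def RPPT [Fintype ιA] [Fintype ιB] (ρ : Matrix (ιA × ιB) (ιA × ιB) ℂ) : ℝ :=
  sInf {t : ℝ | ∃ δ : Matrix (ιA × ιB) (ιA × ιB) ℂ, IsPPT δ ∧ IsPPT (ρ + δ) ∧ (δ.trace).re = t}

/-- Operator norm of a matrix. -/
noncomputable def opNorm {ι : Type*} [Fintype ι] [DecidableEq ι] (M : Matrix ι ι ℂ) : ℝ :=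
  ‖Matrix.toEuclideanCLM (𝕜 := ℂ) (n := ι) M‖

/-- Trace norm of a matrix. -/
noncomputable def traceNorm {ι : Type*} [Fintype ι] [DecidableEq ι] (M : Matrix ι ι ℂ) : ℝ :=
  (((Matrix.posSemidef_conjTranspose_mul_self M).1.eigenvectorUnitary.1 *
      diagonal (fun i => ((Real.sqrt ((Matrix.posSemidef_conjTranspose_mul_self M).1.eigenvalues i) : ℝ) : ℂ)) *
      (star (Matrix.posSemidef_conjTranspose_mul_self M).1.eigenvectorUnitary : Matrix ι ι ℂ)).trace).re

end Defs

/-!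
A decomposition `Λ + λ Γ = (1 + λ) Θ` into PPT-binding channels is carried by the linear map `Υ`
to a decomposition of `Υ Λ` with the same `λ`, so the feasible set of `Υ Λ` contains that of `Λ`
and its infimum can only be smaller. Since `sInf ∅ = 0`, this needs the feasible set of `Λ` to be
nonempty: `λ = d_B` works, with `Γ` the completely depolarizing channel and
`Θ = (Λ + d_B Γ) / (1 + d_B)`. The partial transpose of `(id ⊗ Θ) X` is then a positive multiple
of `M^{T_B} + Tr_B M ⊗ 1` with `M = (id ⊗ Λ) X ≥ 0`, which is positive semidefinite: for `M = u u*`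
its quadratic form at `x` is `∑ S_{bb'} conj S_{b'b} + |S_{bb'}|² = ½ ∑ |S_{bb'} + S_{b'b}|²`,
where `S = Xᴴ U` for the `ιR × ιB` matrices `X`, `U` reshaped from `x`, `u`.
-/

open scoped Kronecker

section PartialTranspose

variable {ιR ιB : Type*}

lemma ptranspose_add (M N : Matrix (ιR × ιB) (ιR × ιB) ℂ) :
    ptranspose (M + N) = ptranspose M + ptranspose N := rfl

lemma ptranspose_smul (c : ℂ) (M : Matrix (ιR × ιB) (ιR × ιB) ℂ) :
    ptranspose (c • M) = c • ptranspose M := rfl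

lemma Matrix.IsHermitian.ptranspose {M : Matrix (ιR × ιB) (ιR × ιB) ℂ} (hM : M.IsHermitian) :
    (ptranspose M).IsHermitian := by
  ext p q
  exact hM.apply _ _

lemma ptranspose_kronecker_one [DecidableEq ιB] (Y : Matrix ιR ιR ℂ) :
    ptranspose (Y ⊗ₖ (1 : Matrix ιB ιB ℂ)) = Y ⊗ₖ 1 := by
  ext p q
  simp [ptranspose, one_apply, eq_comm]

variable [Fintype ιB]

def partialTraceRight (M : Matrix (ιR × ιB) (ιR × ιB) ℂ) : Matrix ιR ιR ℂ :=
  of fun r r' => ∑ b, M (r, b) (r', b)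

lemma partialTraceRight_add (M N : Matrix (ιR × ιB) (ιR × ιB) ℂ) :
    partialTraceRight (M + N) = partialTraceRight M + partialTraceRight N := by
  ext r r'
  simp [partialTraceRight, Finset.sum_add_distrib]

lemma partialTraceRight_eq_sum_submatrix (M : Matrix (ιR × ιB) (ιR × ιB) ℂ) :
    partialTraceRight M = ∑ b, M.submatrix (·, b) (·, b) := by
  ext r r'
  simp [partialTraceRight, Matrix.sum_apply]

lemma Matrix.PosSemidef.partialTraceRight [Fintype ιR] {M : Matrix (ιR × ιB) (ιR × ιB) ℂ}
    (hM : M.PosSemidef) : (partialTraceRight M).PosSemidef := by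
  rw [partialTraceRight_eq_sum_submatrix]
  exact posSemidef_sum _ fun b _ => hM.submatrix _

end PartialTranspose

lemma sum_mul_star_transpose_add_mul_star_nonneg {ι : Type*} [Fintype ι] (S : Matrix ι ι ℂ) :
    0 ≤ ∑ b, ∑ b', (S b b' * star (S b' b) + S b b' * star (S b b')) := by
  have half_sum_sq : ∑ b, ∑ b', (S b b' * star (S b' b) + S b b' * star (S b b')) =
      ∑ b, ∑ b', 2⁻¹ * ((S b b' + S b' b) * star (S b b' + S b' b)) := by
    simp only [star_add, add_mul, mul_add, Finset.sum_add_distrib, ← Finset.mul_sum]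
    rw [Finset.sum_comm (f := fun b b' => S b' b * star (S b b')),
      Finset.sum_comm (f := fun b b' => S b' b * star (S b' b))]
    ring
  rw [half_sum_sq]
  exact Finset.sum_nonneg fun b _ => Finset.sum_nonneg fun b' _ =>
    mul_nonneg (by positivity) (mul_star_self_nonneg _)

section ReductionCriterion

variable {ιR ιB : Type*} [Fintype ιR] [Fintype ιB]

lemma dotProduct_ptranspose_vecMulVec_mulVec (u x : ιR × ιB → ℂ) :
    star x ⬝ᵥ ptranspose (vecMulVec u (star u)) *ᵥ x =
      ∑ b, ∑ b', ((of (Function.curry x))ᴴ * of (Function.curry u)) b b' *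
        star (((of (Function.curry x))ᴴ * of (Function.curry u)) b' b) := by
  simp only [mul_apply, conjTranspose_apply, of_apply, Function.curry_apply, star_sum,
    Finset.sum_mul_sum]
  simp only [dotProduct, mulVec, ptranspose, vecMulVec_apply, of_apply, Pi.star_apply,
    Fintype.sum_prod_type, Finset.mul_sum]
  rw [Finset.sum_comm]
  refine Finset.sum_congr rfl fun b _ => Finset.sum_comm_cycle.trans ?_
  refine Finset.sum_congr rfl fun b' _ => Finset.sum_congr rfl fun r _ =>
    Finset.sum_congr rfl fun r' _ => ?_
  simp only [star_mul', star_star]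
  ring

lemma dotProduct_partialTraceRight_vecMulVec_kronecker_one_mulVec [DecidableEq ιB]
    (u x : ιR × ιB → ℂ) :
    star x ⬝ᵥ (partialTraceRight (vecMulVec u (star u)) ⊗ₖ (1 : Matrix ιB ιB ℂ)) *ᵥ x =
      ∑ b, ∑ b', ((of (Function.curry x))ᴴ * of (Function.curry u)) b b' *
        star (((of (Function.curry x))ᴴ * of (Function.curry u)) b b') := by
  simp only [mul_apply, conjTranspose_apply, of_apply, Function.curry_apply, star_sum,
    Finset.sum_mul_sum]
  simp only [dotProduct, mulVec, kronecker_apply, one_apply, mul_ite, mul_one, mul_zero, ite_mul,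
    zero_mul, Fintype.sum_prod_type, Finset.sum_ite_eq, Finset.mem_univ, if_true]
  simp only [partialTraceRight, vecMulVec_apply, of_apply, Pi.star_apply, Finset.mul_sum,
    Finset.sum_mul]
  rw [Finset.sum_comm]
  refine Finset.sum_congr rfl fun b _ => Finset.sum_comm_cycle.trans ?_
  refine Finset.sum_congr rfl fun c _ => Finset.sum_congr rfl fun r _ =>
    Finset.sum_congr rfl fun r' _ => ?_
  simp only [star_mul', star_star]
  ring

lemma posSemidef_ptranspose_add_partialTraceRight_kronecker_one [DecidableEq ιB]
    {M : Matrix (ιR × ιB) (ιR × ιB) ℂ} (hM : M.PosSemidef) :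
    (ptranspose M + partialTraceRight M ⊗ₖ (1 : Matrix ιB ιB ℂ)).PosSemidef := by
  obtain ⟨m, v, rfl⟩ := posSemidef_iff_eq_sum_vecMulVec.mp hM
  apply Finset.sum_induction _ fun M : Matrix (ιR × ιB) (ιR × ιB) ℂ =>
    (ptranspose M + partialTraceRight M ⊗ₖ (1 : Matrix ιB ιB ℂ)).PosSemidef
  · intro M N hM hN
    rw [ptranspose_add, partialTraceRight_add, add_kronecker, add_add_add_comm]
    exact hM.add hN
  · convert (PosSemidef.zero : (0 : Matrix (ιR × ιB) (ιR × ιB) ℂ).PosSemidef)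
    ext p q
    simp [ptranspose, partialTraceRight]
  · intro i _
    have hu := posSemidef_vecMulVec_self_star (v i)
    refine .of_dotProduct_mulVec_nonneg
      (hu.1.ptranspose.add (hu.partialTraceRight.kronecker PosSemidef.one).1) fun x => ?_
    rw [add_mulVec, dotProduct_add, dotProduct_ptranspose_vecMulVec_mulVec,
      dotProduct_partialTraceRight_vecMulVec_kronecker_one_mulVec]
    simp only [← Finset.sum_add_distrib]
    exact sum_mul_star_transpose_add_mul_star_nonneg _

end ReductionCriterion

section Depolarizing

variable {ιR ιA ιB : Type*}

lemma idTensor_add (Φ Ψ : Matrix ιA ιA ℂ →ₗ[ℂ] Matrix ιB ιB ℂ) :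
    idTensor ιR (Φ + Ψ) = idTensor ιR Φ + idTensor ιR Ψ := by
  ext X p q
  rfl

lemma idTensor_smul (c : ℂ) (Φ : Matrix ιA ιA ℂ →ₗ[ℂ] Matrix ιB ιB ℂ) :
    idTensor ιR (c • Φ) = c • idTensor ιR Φ := by
  ext X p q
  rfl

variable [Fintype ιA] [Fintype ιB]

lemma partialTraceRight_idTensor {Φ : Matrix ιA ιA ℂ →ₗ[ℂ] Matrix ιB ιB ℂ} (hΦ : IsTP Φ)
    (X : Matrix (ιR × ιA) (ιR × ιA) ℂ) :
    partialTraceRight (idTensor ιR Φ X) = partialTraceRight X := by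
  ext r r'
  exact hΦ (of fun a b => X (r, a) (r', b))

variable (ιA ιB) in
noncomputable def depolarizing [DecidableEq ιB] : Matrix ιA ιA ℂ →ₗ[ℂ] Matrix ιB ιB ℂ :=
  (traceLinearMap ιA ℂ ℂ).smulRight ((Fintype.card ιB : ℂ)⁻¹ • 1)

variable [DecidableEq ιB]

lemma idTensor_depolarizing (X : Matrix (ιR × ιA) (ιR × ιA) ℂ) :
    idTensor ιR (depolarizing ιA ιB) X =
      (Fintype.card ιB : ℂ)⁻¹ • (partialTraceRight X ⊗ₖ (1 : Matrix ιB ιB ℂ)) := by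
  ext p q
  simp [idTensor, depolarizing, partialTraceRight, trace, mul_comm, mul_assoc]

lemma isTP_depolarizing [Nonempty ιB] : IsTP (depolarizing ιA ιB) := by
  intro X
  simp [depolarizing]

lemma Matrix.PosSemidef.idTensor_depolarizing [Fintype ιR] {X : Matrix (ιR × ιA) (ιR × ιA) ℂ}
    (hX : X.PosSemidef) : (idTensor ιR (depolarizing ιA ιB) X).PosSemidef := by
  rw [_root_.idTensor_depolarizing]
  exact (hX.partialTraceRight.kronecker PosSemidef.one).smul (by positivity)

lemma ptranspose_idTensor_depolarizing (X : Matrix (ιR × ιA) (ιR × ιA) ℂ) :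
    ptranspose (idTensor ιR (depolarizing ιA ιB) X) = idTensor ιR (depolarizing ιA ιB) X := by
  rw [_root_.idTensor_depolarizing, ptranspose_smul, ptranspose_kronecker_one]

lemma pptBindingChannel_depolarizing [Nonempty ιB] : PPTBindingChannel (depolarizing ιA ιB) := by
  refine ⟨⟨fun _ _ hX => hX.idTensor_depolarizing, isTP_depolarizing⟩, fun _ X hX =>
    ⟨hX.idTensor_depolarizing, ?_⟩⟩
  rw [ptranspose_idTensor_depolarizing]
  exact hX.idTensor_depolarizing

lemma idTensor_add_card_smul_depolarizing [Nonempty ιB] (Λ : Matrix ιA ιA ℂ →ₗ[ℂ] Matrix ιB ιB ℂ)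
    (X : Matrix (ιR × ιA) (ιR × ιA) ℂ) :
    idTensor ιR (Λ + (Fintype.card ιB : ℂ) • depolarizing ιA ιB) X =
      idTensor ιR Λ X + partialTraceRight X ⊗ₖ (1 : Matrix ιB ιB ℂ) := by
  rw [idTensor_add, idTensor_smul, LinearMap.add_apply, LinearMap.smul_apply,
    _root_.idTensor_depolarizing, smul_inv_smul₀ (by positivity)]

lemma pptBindingChannel_smul_add_card_smul_depolarizing [Nonempty ιB]
    {Λ : Matrix ιA ιA ℂ →ₗ[ℂ] Matrix ιB ιB ℂ} (hΛ : IsChannel Λ) :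
    PPTBindingChannel
      ((1 + Fintype.card ιB : ℂ)⁻¹ • (Λ + (Fintype.card ιB : ℂ) • depolarizing ιA ιB)) := by
  have hCP :
      IsCP ((1 + Fintype.card ιB : ℂ)⁻¹ • (Λ + (Fintype.card ιB : ℂ) • depolarizing ιA ιB)) := by
    intro k X hX
    rw [idTensor_smul, LinearMap.smul_apply, idTensor_add_card_smul_depolarizing]
    exact ((hΛ.1 k X hX).add (hX.partialTraceRight.kronecker PosSemidef.one)).smul (by positivity)
  refine ⟨⟨hCP, fun X => ?_⟩, fun k X hX => ⟨hCP k X hX, ?_⟩⟩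
  · simp only [LinearMap.smul_apply, LinearMap.add_apply, trace_smul, trace_add, hΛ.2 X,
      isTP_depolarizing X, smul_eq_mul]
    field_simp
  · rw [idTensor_smul, LinearMap.smul_apply, idTensor_add_card_smul_depolarizing, ptranspose_smul,
      ptranspose_add, ptranspose_kronecker_one, ← partialTraceRight_idTensor hΛ.2 X]
    exact (posSemidef_ptranspose_add_partialTraceRight_kronecker_one (hΛ.1 k X hX)).smul
      (by positivity)

end Depolarizing

section Robustness

variable {ιA ιB : Type*} [Fintype ιA] [Fintype ιB]

def rkeFeasible (Λ : Matrix ιA ιA ℂ →ₗ[ℂ] Matrix ιB ιB ℂ) : Set ℝ :=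
  {l : ℝ | 0 ≤ l ∧ ∃ Γ Θ : Matrix ιA ιA ℂ →ₗ[ℂ] Matrix ιB ιB ℂ,
    PPTBindingChannel Γ ∧ PPTBindingChannel Θ ∧ Λ + (l : ℂ) • Γ = ((1 + l : ℝ) : ℂ) • Θ}

lemma RKE_eq_sInf_rkeFeasible (Λ : Matrix ιA ιA ℂ →ₗ[ℂ] Matrix ιB ιB ℂ) :
    RKE Λ = sInf (rkeFeasible Λ) := rfl

lemma pptBinding_of_isEmpty [IsEmpty ιB] (Φ : Matrix ιA ιA ℂ →ₗ[ℂ] Matrix ιB ιB ℂ) :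
    PPTBinding Φ := by
  have hPSD : ∀ {k : ℕ} (M : Matrix (Fin k × ιB) (Fin k × ιB) ℂ), M.PosSemidef := fun M => by
    rw [Subsingleton.elim M 0]
    exact .zero
  exact fun _ _ _ => ⟨hPSD _, hPSD _⟩

lemma zero_mem_rkeFeasible_of_isEmpty [IsEmpty ιB] {Λ : Matrix ιA ιA ℂ →ₗ[ℂ] Matrix ιB ιB ℂ}
    (hΛ : IsChannel Λ) : 0 ∈ rkeFeasible Λ :=
  ⟨le_rfl, Λ, Λ, ⟨hΛ, pptBinding_of_isEmpty Λ⟩, ⟨hΛ, pptBinding_of_isEmpty Λ⟩, by simp⟩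

lemma card_mem_rkeFeasible [Nonempty ιB] {Λ : Matrix ιA ιA ℂ →ₗ[ℂ] Matrix ιB ιB ℂ}
    (hΛ : IsChannel Λ) : (Fintype.card ιB : ℝ) ∈ rkeFeasible Λ := by
  classical
  refine ⟨Nat.cast_nonneg _, depolarizing ιA ιB, _, pptBindingChannel_depolarizing,
    pptBindingChannel_smul_add_card_smul_depolarizing hΛ, ?_⟩
  push_cast
  rw [smul_inv_smul₀ (by positivity)]

lemma rkeFeasible_nonempty {Λ : Matrix ιA ιA ℂ →ₗ[ℂ] Matrix ιB ιB ℂ} (hΛ : IsChannel Λ) :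
    (rkeFeasible Λ).Nonempty := by
  cases isEmpty_or_nonempty ιB
  · exact ⟨0, zero_mem_rkeFeasible_of_isEmpty hΛ⟩
  · exact ⟨_, card_mem_rkeFeasible hΛ⟩

lemma rkeFeasible_subset_rkeFeasible_map {ιA' ιB' : Type*} [Fintype ιA'] [Fintype ιB']
    {Υ : (Matrix ιA ιA ℂ →ₗ[ℂ] Matrix ιB ιB ℂ) →ₗ[ℂ] (Matrix ιA' ιA' ℂ →ₗ[ℂ] Matrix ιB' ιB' ℂ)}
    (hΥ : ∀ Φ, PPTBindingChannel Φ → PPTBindingChannel (Υ Φ))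
    (Λ : Matrix ιA ιA ℂ →ₗ[ℂ] Matrix ιB ιB ℂ) :
    rkeFeasible Λ ⊆ rkeFeasible (Υ Λ) := by
  rintro l ⟨hl, Γ, Θ, hΓ, hΘ, hdecomp⟩
  refine ⟨hl, Υ Γ, Υ Θ, hΥ Γ hΓ, hΥ Θ hΘ, ?_⟩
  rw [← map_smul, ← map_add, hdecomp, map_smul]

end Robustness

theorem RKE_monotone_general {dA dB dA' dB' : ℕ}
    (Λ : Matrix (Fin dA) (Fin dA) ℂ →ₗ[ℂ] Matrix (Fin dB) (Fin dB) ℂ)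
    (hΛ : IsChannel Λ)
    (Υ : (Matrix (Fin dA) (Fin dA) ℂ →ₗ[ℂ] Matrix (Fin dB) (Fin dB) ℂ) →ₗ[ℂ]
         (Matrix (Fin dA') (Fin dA') ℂ →ₗ[ℂ] Matrix (Fin dB') (Fin dB') ℂ))
    (hke : ∀ Φ : Matrix (Fin dA) (Fin dA) ℂ →ₗ[ℂ] Matrix (Fin dB) (Fin dB) ℂ,
      PPTBindingChannel Φ → PPTBindingChannel (Υ Φ)) :
    RKE (Υ Λ) ≤ RKE Λ := by
  rw [RKE_eq_sInf_rkeFeasible, RKE_eq_sInf_rkeFeasible]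
  exact csInf_le_csInf ⟨0, fun _ hl => hl.1⟩ (rkeFeasible_nonempty hΛ)
    (rkeFeasible_subset_rkeFeasible_map hke Λ)

/-- **Monotonicity of the channel robustness under KE-preserving processes.**
If `Υ` is a linear map on the space of linear maps between matrix algebras that sends
channels to channels and PPT-binding channels to PPT-binding channels, then the channel
robustness (with respect to PPT-binding channels) cannot increase under `Υ`. -/
theorem RKE_monotone {dA dB dA' dB' : ℕ}
    (Λ : Matrix (Fin dA) (Fin dA) ℂ →ₗ[ℂ] Matrix (Fin dB) (Fin dB) ℂ)
    (hΛ : IsChannel Λ)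
    (Υ : (Matrix (Fin dA) (Fin dA) ℂ →ₗ[ℂ] Matrix (Fin dB) (Fin dB) ℂ) →ₗ[ℂ]
         (Matrix (Fin dA') (Fin dA') ℂ →ₗ[ℂ] Matrix (Fin dB') (Fin dB') ℂ))
    (hch : ∀ Φ : Matrix (Fin dA) (Fin dA) ℂ →ₗ[ℂ] Matrix (Fin dB) (Fin dB) ℂ,
      IsChannel Φ → IsChannel (Υ Φ))
    (hke : ∀ Φ : Matrix (Fin dA) (Fin dA) ℂ →ₗ[ℂ] Matrix (Fin dB) (Fin dB) ℂ,
      PPTBindingChannel Φ → PPTBindingChannel (Υ Φ)) :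
    RKE (Υ Λ) ≤ RKE Λ :=
  RKE_monotone_general Λ hΛ Υ hke
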